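/- arXiv:1402.3310 — 2 statements merged into one kernel-verified Lean document; each statement's English description precedes it below -/
import Mathlib

section
/- Let K₁, K₂, K₃, K₄ ∈ ℝ with K₃ > 0, set κ = K₂/K₃, and let n = (n₁,n₂,n₃) : ℝ³ → ℝ³ be a twice continuously differentiable vector field with |n(x)| = 1 for every x. Then at every point of ℝ³, the Frank–Oseen free elastic energy density satisfies: ½K₁(∇·n)² + ½K₂(n·∇×n)² + ½K₃|n×(∇×n)|² + ½(K₂+K₄)∇·[(n·∇)n − (∇·n)n] = ½(K₁−K₂−K₄)(∇·n)² + ½K₃⟨Z(n)(∇×n), ∇×n⟩ + ½(K₂+K₄)(⟨∇n₁, ∂n/∂x⟩ + ⟨∇n₂, ∂n/∂y⟩ + ⟨∇n₃, ∂n/∂z⟩). -/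
/-! The saddle-splay term is a null Lagrangian: for any C² field `v`, symmetry of second
derivatives cancels the third-order terms in `∇·[(v·∇)v − (∇·v)v]`, leaving
`∑ᵢⱼ ∂ⱼvᵢ ∂ᵢvⱼ − (∇·v)²`. What remains is pointwise algebra in `n` and `c = ∇×n`: Lagrange's
identity gives `|n × c|² = |c|² − (n·c)²` for a unit vector `n`, while
`⟨Z(n)c, c⟩ = |c|² − (1−κ)(n·c)²` and `K₃κ = K₂`. -/

open Matrix

/-- The matrix `Z(n) = I - (1-κ) n nᵀ`. -/
noncomputable def Zmat (κ : ℝ) (n : Fin 3 → ℝ) : Matrix (Fin 3) (Fin 3) ℝ :=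
  1 - (1 - κ) • Matrix.vecMulVec n n

/-- Partial derivative of a scalar field on `ℝ³` in the `i`-th coordinate direction. -/
noncomputable def pd (f : (Fin 3 → ℝ) → ℝ) (i : Fin 3) (x : Fin 3 → ℝ) : ℝ :=
  fderiv ℝ f x (Pi.single i 1)

/-- Divergence of a vector field on `ℝ³`. -/
noncomputable def vdiv (v : (Fin 3 → ℝ) → (Fin 3 → ℝ)) (x : Fin 3 → ℝ) : ℝ :=
  ∑ i, pd (fun y => v y i) i x

/-- Curl of a vector field on `ℝ³`. -/
noncomputable def vcurl (v : (Fin 3 → ℝ) → (Fin 3 → ℝ)) (x : Fin 3 → ℝ) : Fin 3 → ℝ :=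
  ![pd (fun y => v y 2) 1 x - pd (fun y => v y 1) 2 x,
    pd (fun y => v y 0) 2 x - pd (fun y => v y 2) 0 x,
    pd (fun y => v y 1) 0 x - pd (fun y => v y 0) 1 x]

section PartialDerivatives

variable {f g : (Fin 3 → ℝ) → ℝ} {p : Fin 3 → ℝ}

lemma pd_sub (hf : DifferentiableAt ℝ f p) (hg : DifferentiableAt ℝ g p) (i : Fin 3) :
    pd (fun x => f x - g x) i p = pd f i p - pd g i p := by
  simp [pd, fderiv_fun_sub hf hg]

lemma pd_mul (hf : DifferentiableAt ℝ f p) (hg : DifferentiableAt ℝ g p) (i : Fin 3) :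
    pd (fun x => f x * g x) i p = pd f i p * g p + f p * pd g i p := by
  simp [pd, fderiv_fun_mul hf hg]
  ring

lemma pd_sum {F : Fin 3 → (Fin 3 → ℝ) → ℝ} (hF : ∀ j, DifferentiableAt ℝ (F j) p) (i : Fin 3) :
    pd (fun x => ∑ j, F j x) i p = ∑ j, pd (F j) i p := by
  simp [pd, fderiv_fun_sum fun j _ => hF j]

lemma ContDiff.differentiableAt_pd (hf : ContDiff ℝ 2 f) (j : Fin 3) (x : Fin 3 → ℝ) :
    DifferentiableAt ℝ (pd f j) x :=
  (((hf.fderiv_right (m := 1) (by norm_num)).clm_apply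
    contDiff_const).differentiable one_ne_zero).differentiableAt

lemma ContDiff.pd_pd_eq_fderiv_fderiv (hf : ContDiff ℝ 2 f) (i j : Fin 3) :
    pd (pd f j) i p = fderiv ℝ (fderiv ℝ f) p (Pi.single i 1) (Pi.single j 1) := by
  have hd : DifferentiableAt ℝ (fderiv ℝ f) p :=
    ((hf.fderiv_right (m := 1) (by norm_num)).differentiable one_ne_zero).differentiableAt
  have : pd f j = fun x => fderiv ℝ f x (Pi.single j 1) := rfl
  simp [pd, this, fderiv_clm_apply hd (differentiableAt_const _)]

lemma ContDiff.pd_pd_comm (hf : ContDiff ℝ 2 f) (i j : Fin 3) :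
    pd (pd f j) i p = pd (pd f i) j p := by
  rw [hf.pd_pd_eq_fderiv_fderiv, hf.pd_pd_eq_fderiv_fderiv]
  exact hf.contDiffAt.isSymmSndFDerivAt (by simp) _ _

end PartialDerivatives

section Divergence

variable {v : (Fin 3 → ℝ) → (Fin 3 → ℝ)}

lemma ContDiff.differentiableAt_vdiv (hv : ContDiff ℝ 2 v) (x : Fin 3 → ℝ) :
    DifferentiableAt ℝ (vdiv v) x :=
  DifferentiableAt.fun_sum fun i _ => (contDiff_apply ℝ ℝ i |>.comp hv).differentiableAt_pd i x

lemma ContDiff.pd_vdiv (hv : ContDiff ℝ 2 v) (i : Fin 3) (p : Fin 3 → ℝ) :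
    pd (vdiv v) i p = ∑ j, pd (pd (fun y => v y j) j) i p :=
  pd_sum (fun j => (contDiff_apply ℝ ℝ j |>.comp hv).differentiableAt_pd j p) i

theorem ContDiff.vdiv_convective_sub_vdiv_smul (hv : ContDiff ℝ 2 v) (p : Fin 3 → ℝ) :
    ∑ i, pd (fun x => (∑ j, v x j * pd (fun y => v y i) j x) - vdiv v x * v x i) i p
      = (∑ i, ∑ j, pd (fun y => v y i) j p * pd (fun y => v y j) i p) - vdiv v p ^ 2 := by
  have hC : ∀ i, ContDiff ℝ 2 (fun y => v y i) := fun i => (contDiff_apply ℝ ℝ i).comp hv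
  have hD : ∀ i x, DifferentiableAt ℝ (fun y => v y i) x := fun i x =>
    ((hC i).differentiable (by norm_num)).differentiableAt
  have expand : ∀ i, pd (fun x => (∑ j, v x j * pd (fun y => v y i) j x) - vdiv v x * v x i) i p
      = (∑ j, (pd (fun y => v y j) i p * pd (fun y => v y i) j p
          + v p j * pd (pd (fun y => v y i) i) j p))
        - ((∑ j, pd (pd (fun y => v y j) j) i p) * v p i
          + vdiv v p * pd (fun y => v y i) i p) := by
    intro i
    have hterm : ∀ j, DifferentiableAt ℝ (fun x => v x j * pd (fun y => v y i) j x) p :=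
      fun j => (hD j p).fun_mul ((hC i).differentiableAt_pd j p)
    rw [pd_sub (.fun_sum fun j _ => hterm j) ((hv.differentiableAt_vdiv p).fun_mul (hD i p)),
      pd_sum hterm, pd_mul (hv.differentiableAt_vdiv p) (hD i p), hv.pd_vdiv]
    congr 1
    refine Finset.sum_congr rfl fun j _ => ?_
    rw [pd_mul (hD j p) ((hC i).differentiableAt_pd j p), (hC i).pd_pd_comm]
  simp only [expand]
  simp only [vdiv, Fin.sum_univ_three]
  ring

end Divergence

lemma Zmat_mulVec_dotProduct (κ : ℝ) (a c : Fin 3 → ℝ) :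
    (Zmat κ a *ᵥ c) ⬝ᵥ c = c ⬝ᵥ c - (1 - κ) * (a ⬝ᵥ c) ^ 2 := by
  simp only [Zmat, sub_mulVec, one_mulVec, smul_mulVec, vecMulVec_mulVec, op_smul_eq_smul,
    sub_dotProduct, smul_dotProduct, smul_eq_mul, dotProduct_comm a c]
  ring

/-- the Frank–Oseen free elastic energy density identity for a unit-length
C² director field `n`, with `κ = K₂/K₃`. -/
theorem stmt6 (K₁ K₂ K₃ K₄ : ℝ) (hK₃ : 0 < K₃)
    (n : (Fin 3 → ℝ) → (Fin 3 → ℝ)) (hn : ContDiff ℝ 2 n)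
    (hunit : ∀ x, n x ⬝ᵥ n x = 1) (p : Fin 3 → ℝ) :
    (1/2) * K₁ * (vdiv n p) ^ 2 + (1/2) * K₂ * (n p ⬝ᵥ vcurl n p) ^ 2
      + (1/2) * K₃ * ((crossProduct (n p) (vcurl n p)) ⬝ᵥ (crossProduct (n p) (vcurl n p)))
      + (1/2) * (K₂ + K₄) *
          (∑ i, pd (fun x => (∑ j, n x j * pd (fun y => n y i) j x) - vdiv n x * n x i) i p) =
    (1/2) * (K₁ - K₂ - K₄) * (vdiv n p) ^ 2
      + (1/2) * K₃ * (((Zmat (K₂ / K₃) (n p)) *ᵥ vcurl n p) ⬝ᵥ vcurl n p)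
      + (1/2) * (K₂ + K₄) *
          (∑ i, ∑ j, pd (fun y => n y i) j p * pd (fun y => n y j) i p) := by
  rw [hn.vdiv_convective_sub_vdiv_smul, Zmat_mulVec_dotProduct, cross_dot_cross, hunit p,
    dotProduct_comm (vcurl n p) (n p)]
  field_simp [hK₃.ne']
  ring
end

section
/- (Small data coercivity, case κ > 1.) Let Ω ⊆ ℝ³ be open and bounded, let K₁, K₃ > 0, and suppose C > 0 is such that every smooth compactly supported vector field v with support in Ω satisfies ∫_Ω |v|² ≤ C(∫_Ω (∇·v)² + ∫_Ω |∇×v|²). Let n_k : ℝ³ → ℝ³ be continuously differentiable with |n_k(x)|² ≤ β (β ≥ 1) and |∇×n_k(x)|² ≤ C_sup for all x ∈ Ω with C_sup > 0, and let λ_k : Ω → ℝ be measurable with λ_k ≥ 0 a.e. on Ω. Set α₁ = min(K₁, K₃)/(C+1) and α₃ = 4K₃√(β C_sup). If K₂ = (1+ε₁)K₃ with 0 < ε₁ < α₁/α₃, then for every smooth compactly supported v with support in Ω, a(v, v) ≥ (α₁ − ε₁α₃) ‖v‖_DC², and α₁ − ε₁α₃ > 0. -/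
open MeasureTheory Matrix

/-- Squared `H(div) ∩ H(curl)` norm over `Ω`:
`‖v‖_DC² = ∫_Ω |v|² + ∫_Ω (∇·v)² + ∫_Ω |∇×v|²`. -/
noncomputable def DCsq (Ω : Set (Fin 3 → ℝ)) (v : (Fin 3 → ℝ) → (Fin 3 → ℝ)) : ℝ :=
  (∫ x in Ω, v x ⬝ᵥ v x) + (∫ x in Ω, (vdiv v x) ^ 2) +
    (∫ x in Ω, vcurl v x ⬝ᵥ vcurl v x)

/-- The linearized bilinear form `a(u,v)` of the Newton iteration, with `κ = K₂/K₃`. -/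
noncomputable def aform (Ω : Set (Fin 3 → ℝ)) (K₁ K₂ K₃ : ℝ)
    (nk : (Fin 3 → ℝ) → (Fin 3 → ℝ)) (lam : (Fin 3 → ℝ) → ℝ)
    (u v : (Fin 3 → ℝ) → (Fin 3 → ℝ)) : ℝ :=
  K₁ * (∫ x in Ω, vdiv u x * vdiv v x)
    + K₃ * (∫ x in Ω, ((Zmat (K₂ / K₃) (nk x)) *ᵥ vcurl u x) ⬝ᵥ vcurl v x)
    + (K₂ - K₃) *
        ((∫ x in Ω, (u x ⬝ᵥ vcurl v x) * (nk x ⬝ᵥ vcurl nk x))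
          + (∫ x in Ω, (nk x ⬝ᵥ vcurl v x) * (u x ⬝ᵥ vcurl nk x))
          + (∫ x in Ω, (nk x ⬝ᵥ vcurl nk x) * (v x ⬝ᵥ vcurl u x))
          + (∫ x in Ω, (nk x ⬝ᵥ vcurl u x) * (v x ⬝ᵥ vcurl nk x))
          + (∫ x in Ω, (u x ⬝ᵥ vcurl nk x) * (v x ⬝ᵥ vcurl nk x)))
    + ∫ x in Ω, lam x * (u x ⬝ᵥ v x)

lemma quad_bound (t P Q s : ℝ) (hP : 0 ≤ P) (hQ : 0 ≤ Q) (hs : 0 ≤ s)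
    (ht : t ^ 2 ≤ P * Q * s ^ 2) : -(s / 2) * (P + Q) ≤ t := by
  by_contra hcon
  push_neg at hcon
  have h0 : 0 ≤ s * (P + Q) := mul_nonneg hs (by linarith)
  have h1 : s * (P + Q) / 2 + t < 0 := by linarith
  have h2 : 0 < s * (P + Q) / 2 - t := by linarith
  have h3 : (s * (P + Q) / 2 - t) * (s * (P + Q) / 2 + t) < 0 :=
    mul_neg_of_pos_of_neg h2 h1
  linarith only [h3, ht, sq_nonneg (s * (P - Q))]

lemma dot_self_nonneg' (a : Fin 3 → ℝ) : 0 ≤ a ⬝ᵥ a :=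
  Finset.sum_nonneg fun i _ => mul_self_nonneg _

lemma dot_sq_le (a b : Fin 3 → ℝ) : (a ⬝ᵥ b) ^ 2 ≤ (a ⬝ᵥ a) * (b ⬝ᵥ b) := by
  simp only [dotProduct, Fin.sum_univ_three]
  nlinarith [sq_nonneg (a 0 * b 1 - a 1 * b 0), sq_nonneg (a 0 * b 2 - a 2 * b 0),
    sq_nonneg (a 1 * b 2 - a 2 * b 1)]

lemma Zdot (κ : ℝ) (n w : Fin 3 → ℝ) :
    (Zmat κ n *ᵥ w) ⬝ᵥ w = w ⬝ᵥ w + (κ - 1) * (n ⬝ᵥ w) ^ 2 := by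
  simp [Zmat, Matrix.mulVec, dotProduct, Matrix.vecMulVec_apply, Fin.sum_univ_three,
    Matrix.one_apply, Matrix.sub_apply, Matrix.smul_apply]
  ring

lemma pd_continuous {f : (Fin 3 → ℝ) → ℝ} (hf : ContDiff ℝ 1 f) (i : Fin 3) :
    Continuous (pd f i) := by
  unfold pd
  exact (hf.continuous_fderiv one_ne_zero).clm_apply continuous_const

lemma vdiv_continuous {v : (Fin 3 → ℝ) → (Fin 3 → ℝ)} (hv : ContDiff ℝ 1 v) :
    Continuous (vdiv v) := by
  unfold vdiv
  exact continuous_finset_sum _ fun i _ => pd_continuous (contDiff_pi.mp hv i) i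

lemma vcurl_continuous {v : (Fin 3 → ℝ) → (Fin 3 → ℝ)} (hv : ContDiff ℝ 1 v) :
    Continuous (vcurl v) := by
  unfold vcurl
  apply continuous_pi
  intro i
  fin_cases i <;>
    simp only [Matrix.cons_val_zero, Matrix.cons_val_one, Matrix.head_cons, Fin.mk_one,
      Fin.isValue, Matrix.cons_val_two, Matrix.tail_cons] <;>
    exact (pd_continuous (contDiff_pi.mp hv _) _).sub (pd_continuous (contDiff_pi.mp hv _) _)

lemma dot_continuous {f g : (Fin 3 → ℝ) → (Fin 3 → ℝ)} (hf : Continuous f)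
    (hg : Continuous g) : Continuous (fun x => f x ⬝ᵥ g x) := by
  simp only [dotProduct]
  exact continuous_finset_sum _ fun i _ =>
    ((continuous_apply i).comp hf).mul ((continuous_apply i).comp hg)

set_option maxHeartbeats 1000000 in
/-- small data coercivity, `κ > 1`: if `K₂ = (1+ε₁)K₃` with
`0 < ε₁ < α₁/α₃`, where `α₁ = min(K₁,K₃)/(C+1)` and `α₃ = 4K₃√(βC_sup)`, then
`a(v,v) ≥ (α₁ − ε₁α₃)‖v‖_DC²` with `α₁ − ε₁α₃ > 0`. -/
theorem stmt15 (Ω : Set (Fin 3 → ℝ)) (hΩo : IsOpen Ω) (hΩb : Bornology.IsBounded Ω)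
    (K₁ K₃ C : ℝ) (hK₁ : 0 < K₁) (hK₃ : 0 < K₃) (hC : 0 < C)
    (hPoincare : ∀ v : (Fin 3 → ℝ) → (Fin 3 → ℝ),
      ContDiff ℝ (⊤ : ℕ∞) v → HasCompactSupport v → tsupport v ⊆ Ω →
      (∫ x in Ω, v x ⬝ᵥ v x) ≤
        C * ((∫ x in Ω, (vdiv v x) ^ 2) + (∫ x in Ω, vcurl v x ⬝ᵥ vcurl v x)))
    (β Csup : ℝ) (hβ : 1 ≤ β) (hCsup : 0 < Csup)
    (nk : (Fin 3 → ℝ) → (Fin 3 → ℝ)) (hnk : ContDiff ℝ 1 nk)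
    (hnβ : ∀ x ∈ Ω, nk x ⬝ᵥ nk x ≤ β)
    (hncurl : ∀ x ∈ Ω, vcurl nk x ⬝ᵥ vcurl nk x ≤ Csup)
    (lam : (Fin 3 → ℝ) → ℝ) (hlam_meas : Measurable lam)
    (hlam : ∀ᵐ x ∂(volume.restrict Ω), 0 ≤ lam x)
    (ε₁ K₂ : ℝ) (hε₁ : 0 < ε₁)
    (hε₁' : ε₁ < (min K₁ K₃ / (C + 1)) / (4 * K₃ * Real.sqrt (β * Csup)))
    (hK₂ : K₂ = (1 + ε₁) * K₃) :
    0 < min K₁ K₃ / (C + 1) - ε₁ * (4 * K₃ * Real.sqrt (β * Csup)) ∧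
    ∀ v : (Fin 3 → ℝ) → (Fin 3 → ℝ),
      ContDiff ℝ (⊤ : ℕ∞) v → HasCompactSupport v → tsupport v ⊆ Ω →
      (min K₁ K₃ / (C + 1) - ε₁ * (4 * K₃ * Real.sqrt (β * Csup))) * DCsq Ω v ≤
        aform Ω K₁ K₂ K₃ nk lam v v := by
  have hm : 0 < min K₁ K₃ := lt_min hK₁ hK₃
  set s : ℝ := Real.sqrt (β * Csup) with hs_def
  have hβC : 0 < β * Csup := mul_pos (lt_of_lt_of_le one_pos hβ) hCsup
  have hs : 0 < s := Real.sqrt_pos.mpr hβC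
  have hss : s ^ 2 = β * Csup := Real.sq_sqrt hβC.le
  set α₁ : ℝ := min K₁ K₃ / (C + 1) with hα₁_def
  set α₃ : ℝ := 4 * K₃ * s with hα₃_def
  have hα₁ : 0 < α₁ := div_pos hm (by linarith)
  have hα₃ : 0 < α₃ := by positivity
  have hmain : ε₁ * α₃ < α₁ := (lt_div_iff₀ hα₃).mp hε₁'
  refine ⟨by linarith, ?_⟩
  intro v hv hcs hsupp
  have hKcl : IsCompact (closure Ω) := hΩb.isCompact_closure
  have intgOn : ∀ f : (Fin 3 → ℝ) → ℝ, Continuous f → IntegrableOn f Ω volume := fun f hf =>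
    (hf.continuousOn.integrableOn_compact hKcl).mono_set subset_closure
  have hv1 : ContDiff ℝ 1 v := hv.of_le (by simp)
  have hvC : Continuous v := hv.continuous
  have hnkC : Continuous nk := hnk.continuous
  have hdC : Continuous (vdiv v) := vdiv_continuous hv1
  have hcC : Continuous (vcurl v) := vcurl_continuous hv1
  have hcnC : Continuous (vcurl nk) := vcurl_continuous hnk
  set I0 : ℝ := ∫ x in Ω, v x ⬝ᵥ v x with hI0_def
  set D : ℝ := ∫ x in Ω, (vdiv v x) ^ 2 with hD_def
  set R : ℝ := ∫ x in Ω, vcurl v x ⬝ᵥ vcurl v x with hR_def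
  have hI0 : 0 ≤ I0 := setIntegral_nonneg hΩo.measurableSet fun x _ => dot_self_nonneg' _
  have hD : 0 ≤ D := setIntegral_nonneg hΩo.measurableSet fun x _ => sq_nonneg _
  have hR : 0 ≤ R := setIntegral_nonneg hΩo.measurableSet fun x _ => dot_self_nonneg' _
  have hPoin : I0 ≤ C * (D + R) := hPoincare v hv hcs hsupp
  have hκ : K₂ / K₃ = 1 + ε₁ := by field_simp [hK₂]; rw [hK₂]; ring
  -- the divergence term
  have hDD : (∫ x in Ω, vdiv v x * vdiv v x) = D := by
    rw [hD_def]; congr 1; ext x; rw [pow_two]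
  -- the Z term
  have hZge : R ≤ ∫ x in Ω, (Zmat (K₂ / K₃) (nk x) *ᵥ vcurl v x) ⬝ᵥ vcurl v x := by
    have heq : ∀ x, (Zmat (K₂ / K₃) (nk x) *ᵥ vcurl v x) ⬝ᵥ vcurl v x
        = vcurl v x ⬝ᵥ vcurl v x + ε₁ * (nk x ⬝ᵥ vcurl v x) ^ 2 := fun x => by
      rw [Zdot, hκ]; ring
    simp only [heq]
    rw [integral_add (intgOn _ (dot_continuous hcC hcC))
      (intgOn (fun x => ε₁ * (nk x ⬝ᵥ vcurl v x) ^ 2) (continuous_const.mul ((dot_continuous hnkC hcC).pow 2)))]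
    have h2 : 0 ≤ ∫ x in Ω, ε₁ * (nk x ⬝ᵥ vcurl v x) ^ 2 :=
      setIntegral_nonneg hΩo.measurableSet fun x _ => by positivity
    linarith
  -- base integral for cross-term bounds
  have hbaseC : Continuous (fun x => -(s / 2) * (v x ⬝ᵥ v x + vcurl v x ⬝ᵥ vcurl v x)) :=
    continuous_const.mul ((dot_continuous hvC hvC).add (dot_continuous hcC hcC))
  have hbase : (∫ x in Ω, -(s / 2) * (v x ⬝ᵥ v x + vcurl v x ⬝ᵥ vcurl v x))
      = -(s / 2) * (I0 + R) := by
    rw [integral_const_mul, integral_add (intgOn _ (dot_continuous hvC hvC))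
      (intgOn _ (dot_continuous hcC hcC))]
  -- pointwise facts over Ω
  have hptA : ∀ x ∈ Ω, -(s / 2) * (v x ⬝ᵥ v x + vcurl v x ⬝ᵥ vcurl v x)
      ≤ (v x ⬝ᵥ vcurl v x) * (nk x ⬝ᵥ vcurl nk x) := by
    intro x hx
    apply quad_bound _ _ _ _ (dot_self_nonneg' _) (dot_self_nonneg' _) hs.le
    have h1 := dot_sq_le (v x) (vcurl v x)
    have h2 := dot_sq_le (nk x) (vcurl nk x)
    have h3 := hnβ x hx
    have h4 := hncurl x hx
    have h5 := dot_self_nonneg' (nk x)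
    have h6 := dot_self_nonneg' (vcurl nk x)
    rw [hss]
    have hb2 : (nk x ⬝ᵥ vcurl nk x) ^ 2 ≤ β * Csup :=
      le_trans h2 (mul_le_mul h3 h4 h6 (le_trans zero_le_one hβ))
    calc ((v x ⬝ᵥ vcurl v x) * (nk x ⬝ᵥ vcurl nk x)) ^ 2
        = (v x ⬝ᵥ vcurl v x) ^ 2 * (nk x ⬝ᵥ vcurl nk x) ^ 2 := by ring
      _ ≤ ((v x ⬝ᵥ v x) * (vcurl v x ⬝ᵥ vcurl v x)) * (β * Csup) :=
          mul_le_mul h1 hb2 (sq_nonneg _)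
            (mul_nonneg (dot_self_nonneg' _) (dot_self_nonneg' _))
      _ = (v x ⬝ᵥ v x) * (vcurl v x ⬝ᵥ vcurl v x) * (β * Csup) := by ring
  have hptB : ∀ x ∈ Ω, -(s / 2) * (v x ⬝ᵥ v x + vcurl v x ⬝ᵥ vcurl v x)
      ≤ (nk x ⬝ᵥ vcurl v x) * (v x ⬝ᵥ vcurl nk x) := by
    intro x hx
    apply quad_bound _ _ _ _ (dot_self_nonneg' _) (dot_self_nonneg' _) hs.le
    have h1 := dot_sq_le (nk x) (vcurl v x)
    have h2 := dot_sq_le (v x) (vcurl nk x)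
    have h3 := hnβ x hx
    have h4 := hncurl x hx
    have h5 := dot_self_nonneg' (nk x)
    have h6 := dot_self_nonneg' (vcurl nk x)
    rw [hss]
    have ha2 : (nk x ⬝ᵥ vcurl v x) ^ 2 ≤ β * (vcurl v x ⬝ᵥ vcurl v x) :=
      le_trans h1 (mul_le_mul_of_nonneg_right h3 (dot_self_nonneg' _))
    have hb2 : (v x ⬝ᵥ vcurl nk x) ^ 2 ≤ (v x ⬝ᵥ v x) * Csup :=
      le_trans h2 (mul_le_mul_of_nonneg_left h4 (dot_self_nonneg' _))
    calc ((nk x ⬝ᵥ vcurl v x) * (v x ⬝ᵥ vcurl nk x)) ^ 2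
        = (nk x ⬝ᵥ vcurl v x) ^ 2 * (v x ⬝ᵥ vcurl nk x) ^ 2 := by ring
      _ ≤ (β * (vcurl v x ⬝ᵥ vcurl v x)) * ((v x ⬝ᵥ v x) * Csup) :=
          mul_le_mul ha2 hb2 (sq_nonneg _)
            (mul_nonneg (by linarith) (dot_self_nonneg' _))
      _ = (v x ⬝ᵥ v x) * (vcurl v x ⬝ᵥ vcurl v x) * (β * Csup) := by ring
  -- the five cross integrals
  have hT1 : -(s / 2) * (I0 + R) ≤ ∫ x in Ω, (v x ⬝ᵥ vcurl v x) * (nk x ⬝ᵥ vcurl nk x) := by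
    rw [← hbase]
    exact setIntegral_mono_on (intgOn _ hbaseC)
      (intgOn _ ((dot_continuous hvC hcC).mul (dot_continuous hnkC hcnC)))
      hΩo.measurableSet hptA
  have hT2 : -(s / 2) * (I0 + R) ≤ ∫ x in Ω, (nk x ⬝ᵥ vcurl v x) * (v x ⬝ᵥ vcurl nk x) := by
    rw [← hbase]
    exact setIntegral_mono_on (intgOn _ hbaseC)
      (intgOn _ ((dot_continuous hnkC hcC).mul (dot_continuous hvC hcnC)))
      hΩo.measurableSet hptB
  have hT3 : -(s / 2) * (I0 + R) ≤ ∫ x in Ω, (nk x ⬝ᵥ vcurl nk x) * (v x ⬝ᵥ vcurl v x) := by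
    rw [← hbase]
    refine setIntegral_mono_on (intgOn _ hbaseC)
      (intgOn _ ((dot_continuous hnkC hcnC).mul (dot_continuous hvC hcC)))
      hΩo.measurableSet (fun x hx => ?_)
    rw [show (nk x ⬝ᵥ vcurl nk x) * (v x ⬝ᵥ vcurl v x)
      = (v x ⬝ᵥ vcurl v x) * (nk x ⬝ᵥ vcurl nk x) from mul_comm _ _]
    exact hptA x hx
  have hT4 : -(s / 2) * (I0 + R) ≤ ∫ x in Ω, (nk x ⬝ᵥ vcurl v x) * (v x ⬝ᵥ vcurl nk x) := hT2
  have hT5 : 0 ≤ ∫ x in Ω, (v x ⬝ᵥ vcurl nk x) * (v x ⬝ᵥ vcurl nk x) :=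
    setIntegral_nonneg hΩo.measurableSet fun x _ => mul_self_nonneg _
  -- the lambda term
  have hL : 0 ≤ ∫ x in Ω, lam x * (v x ⬝ᵥ v x) :=
    integral_nonneg_of_ae (hlam.mono fun x hx => mul_nonneg hx (dot_self_nonneg' _))
  -- assemble
  have hK2K3 : K₂ - K₃ = ε₁ * K₃ := by rw [hK₂]; ring
  have hεK : 0 ≤ ε₁ * K₃ := by positivity
  set Z : ℝ := ∫ x in Ω, (Zmat (K₂ / K₃) (nk x) *ᵥ vcurl v x) ⬝ᵥ vcurl v x with hZ_def
  set T1 : ℝ := ∫ x in Ω, (v x ⬝ᵥ vcurl v x) * (nk x ⬝ᵥ vcurl nk x) with hT1_def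
  set T2 : ℝ := ∫ x in Ω, (nk x ⬝ᵥ vcurl v x) * (v x ⬝ᵥ vcurl nk x) with hT2_def
  set T3 : ℝ := ∫ x in Ω, (nk x ⬝ᵥ vcurl nk x) * (v x ⬝ᵥ vcurl v x) with hT3_def
  set T5 : ℝ := ∫ x in Ω, (v x ⬝ᵥ vcurl nk x) * (v x ⬝ᵥ vcurl nk x) with hT5_def
  set L : ℝ := ∫ x in Ω, lam x * (v x ⬝ᵥ v x) with hL_def
  have hDC : DCsq Ω v = I0 + D + R := rfl
  have hAF : aform Ω K₁ K₂ K₃ nk lam v v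
      = K₁ * (∫ x in Ω, vdiv v x * vdiv v x) + K₃ * Z
        + (K₂ - K₃) * (T1 + T2 + T3 + T2 + T5) + L := rfl
  rw [hDC, hAF, hDD]
  clear_value I0 D R Z T1 T2 T3 T5 L s
  have hZ' : K₃ * R ≤ K₃ * Z := mul_le_mul_of_nonneg_left hZge hK₃.le
  have hcross : (ε₁ * K₃) * (4 * (-(s / 2) * (I0 + R)) + 0)
      ≤ (K₂ - K₃) * (T1 + T2 + T3 + T2 + T5) := by
    rw [hK2K3]
    apply mul_le_mul_of_nonneg_left _ hεK
    linarith
  have h1 : α₁ * (I0 + D + R) ≤ K₁ * D + K₃ * R := by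
    have hα₁C : α₁ * (C + 1) = min K₁ K₃ := div_mul_cancel₀ _ (by linarith)
    have e1 : α₁ * (I0 + D + R) ≤ α₁ * ((C + 1) * (D + R)) :=
      mul_le_mul_of_nonneg_left (by linarith) hα₁.le
    have e2 : α₁ * ((C + 1) * (D + R)) = min K₁ K₃ * (D + R) := by
      rw [← mul_assoc, hα₁C]
    have e3 : min K₁ K₃ * D ≤ K₁ * D := mul_le_mul_of_nonneg_right (min_le_left _ _) hD
    have e4 : min K₁ K₃ * R ≤ K₃ * R := mul_le_mul_of_nonneg_right (min_le_right _ _) hR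
    linarith only [e1, e2, e3, e4]
  have h2 : -(ε₁ * α₃) * (I0 + D + R) ≤ ε₁ * K₃ * (4 * (-(s / 2) * (I0 + R)) + 0) := by
    have hq : (0:ℝ) ≤ ε₁ * K₃ * s := by positivity
    have key : (ε₁ * K₃ * s) * (2 * (I0 + R)) ≤ (ε₁ * K₃ * s) * (4 * (I0 + D + R)) :=
      mul_le_mul_of_nonneg_left (by linarith) hq
    rw [hα₃_def]
    linarith only [key]
  have h3 : ε₁ * K₃ * (4 * (-(s / 2) * (I0 + R)) + 0)
      = (ε₁ * K₃) * (4 * (-(s / 2) * (I0 + R)) + 0) := by ring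
  linarith only [h1, h2, hcross, hZ', hL, h3]
end
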